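/- arXiv:1711.01669 — 3 statements merged into one kernel-verified Lean document; each statement's English description precedes it below -/
import Mathlib

section
/- Let n ≥ 3, let μ be a finite Borel measure on ℝ^n, and let x₀ ∈ ℝ^n be a point with W^μ(x₀) = +∞. Define u(x) = ∫_{ℝ^n} |x-y|^{2-n} dμ(y). Then for every T ∈ (0,∞] and every continuously differentiable curve c : [0,T) → ℝ^n satisfying |c(0) - x₀| ≥ 1/2 and inf_{t ∈ [0,T)} |c(t) - x₀| = 0, the weighted length ∫_0^T u(c(t))^{2/(n-2)} ‖c'(t)‖ dt is infinite. -/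
open MeasureTheory ENNReal

/-- The Wolff potential `W^μ(x) = ∫_0^1 (μ(B(x,r))/r^{n-2})^{2/(n-2)} dr`. -/
noncomputable def wolff (n : ℕ) (μ : Measure (EuclideanSpace ℝ (Fin n)))
    (x : EuclideanSpace ℝ (Fin n)) : ℝ≥0∞ :=
  ∫⁻ r in Set.Ioo (0:ℝ) 1,
    (μ (Metric.ball x r) / ENNReal.ofReal (r ^ (n - 2))) ^ ((2:ℝ) / ((n:ℝ) - 2))

/-!
For every `k` the curve, which starts outside `B(x₀, 1/2)` and comes arbitrarily close to `x₀`,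
must cross the annulus `2^{-k-2} < |x - x₀| < 2^{-k-1}`; taking the first time it reaches the
inner sphere and the last time before that it was on the outer one gives pairwise disjoint time
intervals. On such an interval the curve stays in `B(x₀, 2^{-k-1})`, so
`u(c(t)) ≥ 2^{k(n-2)} μ(B(x₀, 2^{-k-1}))`, and it travels a distance at least `2^{-k-2}`; hence the
weighted length over it is at least `2^{k+1} μ(B(x₀, 2^{-k-1}))^{2/(n-2)} / 8`. Splitting `(0, 1)`
into dyadic intervals bounds `W^μ(x₀)` by twice the sum of `2^j μ(B(x₀, 2^{-j}))^{2/(n-2)}`, so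
these lower bounds have an infinite sum.
-/

open Set Metric Function

theorem ENNReal.rpow_le_rpow_of_nonpos {x y : ℝ≥0∞} {z : ℝ} (hz : z ≤ 0) (hxy : x ≤ y) :
    y ^ z ≤ x ^ z := by
  simpa only [ENNReal.rpow_neg, neg_neg, inv_inv] using
    ENNReal.inv_le_inv.2 (ENNReal.rpow_le_rpow hxy (neg_nonneg.2 hz))

theorem ofReal_norm_sub_le_lintegral_norm_deriv {E : Type*} [NormedAddCommGroup E]
    [NormedSpace ℝ E] {c c' : ℝ → E} {a b : ℝ} (hab : a ≤ b)
    (hc : ∀ t ∈ Icc a b, HasDerivWithinAt c (c' t) (Icc a b) t)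
    (hc' : ContinuousOn c' (Icc a b)) :
    ENNReal.ofReal ‖c b - c a‖ ≤ ∫⁻ t in Ioo a b, ENNReal.ofReal ‖c' t‖ := by
  have hderiv : ∀ t ∈ Ioo a b, HasDerivAt c (c' t) t := fun t ht =>
    (hc t (Ioo_subset_Icc_self ht)).hasDerivAt (Icc_mem_nhds ht.1 ht.2)
  have hint : IntegrableOn (fun t => ‖c' t‖) (Icc a b) :=
    hc'.norm.integrableOn_compact isCompact_Icc
  have hdisp : ‖c b - c a‖ ≤ ∫ t in a..b, ‖c' t‖ :=
    norm_sub_le_integral_of_norm_deriv_le_of_le hab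
      (fun t ht => (hc t ht).continuousWithinAt)
      (fun t ht => (hderiv t ht).differentiableAt.differentiableWithinAt)
      (ae_of_all _ fun t ht => le_of_eq (congrArg norm (hderiv t ht).deriv))
      (hc'.norm.intervalIntegrable_of_Icc hab)
  rw [intervalIntegral.integral_of_le hab, integral_Ioc_eq_integral_Ioo] at hdisp
  calc ENNReal.ofReal ‖c b - c a‖ ≤ ENNReal.ofReal (∫ t in Ioo a b, ‖c' t‖) :=
        ENNReal.ofReal_le_ofReal hdisp
    _ = ∫⁻ t in Ioo a b, ENNReal.ofReal ‖c' t‖ :=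
        ofReal_integral_eq_lintegral_ofReal (hint.mono_set Ioo_subset_Icc_self)
          (ae_of_all _ fun t => norm_nonneg _)

theorem rpow_mul_measure_ball_le_lintegral_rpow {E : Type*} [SeminormedAddCommGroup E]
    [MeasurableSpace E] [OpensMeasurableSpace E] (μ : Measure E) {s : ℝ} (hs : s ≤ 0)
    {x x₀ : E} {r : ℝ} (hx : ‖x - x₀‖ ≤ r) :
    ENNReal.ofReal (2 * r) ^ s * μ (ball x₀ r) ≤ ∫⁻ y, ENNReal.ofReal ‖x - y‖ ^ s ∂μ := by
  have hball : ∀ y ∈ ball x₀ r, ENNReal.ofReal (2 * r) ^ s ≤ ENNReal.ofReal ‖x - y‖ ^ s :=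
    fun y hy => ENNReal.rpow_le_rpow_of_nonpos hs <| ENNReal.ofReal_le_ofReal <| by
      have := norm_sub_le_norm_sub_add_norm_sub x x₀ y
      rw [mem_ball, dist_eq_norm, ← norm_neg, neg_sub] at hy
      linarith
  calc ENNReal.ofReal (2 * r) ^ s * μ (ball x₀ r)
      = ∫⁻ _ in ball x₀ r, ENNReal.ofReal (2 * r) ^ s ∂μ := (setLIntegral_const _ _).symm
    _ ≤ ∫⁻ y in ball x₀ r, ENNReal.ofReal ‖x - y‖ ^ s ∂μ :=
        setLIntegral_mono' measurableSet_ball hball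
    _ ≤ ∫⁻ y, ENNReal.ofReal ‖x - y‖ ^ s ∂μ := setLIntegral_le_lintegral _ _

theorem exists_crossing_interval {f : ℝ → ℝ} {s t lo hi : ℝ} (hst : s ≤ t)
    (hf : ContinuousOn f (Icc s t)) (hlh : lo < hi) (hs : hi ≤ f s) (ht : f t ≤ lo) :
    ∃ a b, s ≤ a ∧ a < b ∧ b ≤ t ∧ hi ≤ f a ∧ f b ≤ lo ∧ MapsTo f (Ioo a b) (Ioo lo hi) := by
  -- `b` is the first time `f` drops to `lo`, `a` the last time before `b` that `f` is `≥ hi`.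
  set B := Icc s t ∩ f ⁻¹' Iic lo
  have hB : IsClosed B := hf.preimage_isClosed_of_isClosed isClosed_Icc isClosed_Iic
  have hBne : B.Nonempty := ⟨t, ⟨hst, le_rfl⟩, ht⟩
  have hBbdd : BddBelow B := ⟨s, fun x hx => hx.1.1⟩
  have hbB : sInf B ∈ B := hB.csInf_mem hBne hBbdd
  set b := sInf B
  set A := Icc s b ∩ f ⁻¹' Ici hi
  have hA : IsClosed A := (hf.mono (Icc_subset_Icc_right hbB.1.2)).preimage_isClosed_of_isClosed
    isClosed_Icc isClosed_Ici
  have hAbdd : BddAbove A := ⟨b, fun x hx => hx.1.2⟩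
  have haA : sSup A ∈ A := hA.csSup_mem ⟨s, ⟨le_rfl, hbB.1.1⟩, hs⟩ hAbdd
  set a := sSup A
  have hab : a < b := haA.1.2.lt_of_ne fun h => (hlh.trans_le haA.2).not_ge (h ▸ hbB.2)
  refine ⟨a, b, haA.1.1, hab, hbB.1.2, haA.2, hbB.2, fun x hx => ⟨?_, ?_⟩⟩
  · by_contra! h
    exact hx.2.not_ge (csInf_le hBbdd ⟨⟨haA.1.1.trans hx.1.le, hx.2.le.trans hbB.1.2⟩, h⟩)
  · by_contra! h
    exact hx.1.not_ge (le_csSup hAbdd ⟨⟨haA.1.1.trans hx.1.le, hx.2.le⟩, h⟩)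

theorem sub_two_pos_of_three_le {n : ℕ} (hn : 3 ≤ n) : (0:ℝ) < n - 2 := by
  have : (3:ℝ) ≤ n := by exact_mod_cast hn
  linarith

theorem two_div_sub_two_pos {n : ℕ} (hn : 3 ≤ n) : (0:ℝ) < 2 / ((n:ℝ) - 2) :=
  div_pos two_pos (sub_two_pos_of_three_le hn)

theorem two_sub_mul_two_div_sub_two {n : ℕ} (hn : 3 ≤ n) :
    ((2:ℝ) - n) * (2 / ((n:ℝ) - 2)) = -2 := by
  have := (sub_two_pos_of_three_le hn).ne'
  field_simp
  ring

theorem wolff_integrand_eq_div_sq {n : ℕ} (hn : 3 ≤ n) (m : ℝ≥0∞) {r : ℝ} (hr : 0 ≤ r) :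
    (m / ENNReal.ofReal (r ^ (n - 2))) ^ ((2:ℝ) / ((n:ℝ) - 2)) =
      m ^ ((2:ℝ) / ((n:ℝ) - 2)) / ENNReal.ofReal r ^ 2 := by
  have hexp : ((n - 2 : ℕ) : ℝ) * (2 / ((n:ℝ) - 2)) = 2 := by
    rw [Nat.cast_sub (by omega : 2 ≤ n), Nat.cast_ofNat]
    exact mul_div_cancel₀ _ (sub_two_pos_of_three_le hn).ne'
  rw [ENNReal.div_rpow_of_nonneg _ _ (two_div_sub_two_pos hn).le, ENNReal.ofReal_pow hr,
    ← ENNReal.rpow_natCast, ← ENNReal.rpow_mul, hexp, ENNReal.rpow_two]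

theorem setLIntegral_wolff_integrand_Ioc_le {n : ℕ} (hn : 3 ≤ n)
    (μ : Measure (EuclideanSpace ℝ (Fin n))) (x : EuclideanSpace ℝ (Fin n)) {ρ : ℝ}
    (hρ : 0 < ρ) :
    ∫⁻ r in Ioc (ρ / 2) ρ,
        (μ (ball x r) / ENNReal.ofReal (r ^ (n - 2))) ^ ((2:ℝ) / ((n:ℝ) - 2)) ≤
      2 * (μ (ball x ρ) ^ ((2:ℝ) / ((n:ℝ) - 2)) / ENNReal.ofReal ρ) := by
  set p : ℝ := (2:ℝ) / ((n:ℝ) - 2)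
  have hbound : ∀ r ∈ Ioc (ρ / 2) ρ, (μ (ball x r) / ENNReal.ofReal (r ^ (n - 2))) ^ p ≤
      μ (ball x ρ) ^ p / ENNReal.ofReal (ρ / 2) ^ 2 := fun r hr => by
    rw [wolff_integrand_eq_div_sq hn _ (by linarith [hr.1])]
    gcongr
    exacts [(two_div_sub_two_pos hn).le, hr.2, hr.1.le]
  have hhalf : ENNReal.ofReal (ρ / 2) ≠ 0 := by simp [hρ]
  calc ∫⁻ r in Ioc (ρ / 2) ρ, (μ (ball x r) / ENNReal.ofReal (r ^ (n - 2))) ^ p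
      ≤ ∫⁻ _ in Ioc (ρ / 2) ρ, μ (ball x ρ) ^ p / ENNReal.ofReal (ρ / 2) ^ 2 :=
        setLIntegral_mono' measurableSet_Ioc hbound
    _ = μ (ball x ρ) ^ p / ENNReal.ofReal (ρ / 2) ^ 2 * ENNReal.ofReal (ρ / 2) := by
        rw [setLIntegral_const, Real.volume_Ioc, _root_.sub_half]
    _ = μ (ball x ρ) ^ p / ENNReal.ofReal (ρ / 2) := by
        rw [ENNReal.div_eq_inv_mul, ENNReal.div_eq_inv_mul, ENNReal.inv_pow, pow_two, mul_comm,
          ← mul_assoc, ← mul_assoc, ENNReal.mul_inv_cancel hhalf ENNReal.ofReal_ne_top, one_mul]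
    _ = 2 * (μ (ball x ρ) ^ p / ENNReal.ofReal ρ) := by
        rw [ENNReal.ofReal_div_of_pos two_pos, ENNReal.ofReal_ofNat, div_eq_mul_inv,
          div_eq_mul_inv, div_eq_mul_inv, ENNReal.mul_inv (by simp) (by simp), inv_inv]
        ring

theorem wolff_le_two_mul_tsum {n : ℕ} (hn : 3 ≤ n) (μ : Measure (EuclideanSpace ℝ (Fin n)))
    (x : EuclideanSpace ℝ (Fin n)) :
    wolff n μ x ≤ 2 * ∑' j : ℕ,
      μ (ball x ((2:ℝ)⁻¹ ^ j)) ^ ((2:ℝ) / ((n:ℝ) - 2)) / ENNReal.ofReal ((2:ℝ)⁻¹ ^ j) := by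
  have hcover : Ioo (0:ℝ) 1 ⊆ ⋃ j : ℕ, Ioc ((2:ℝ)⁻¹ ^ j / 2) ((2:ℝ)⁻¹ ^ j) := fun r hr => by
    obtain ⟨j, hj⟩ := exists_nat_pow_near_of_lt_one hr.1 hr.2.le (by norm_num : (0:ℝ) < 2⁻¹)
      (by norm_num)
    exact mem_iUnion.2 ⟨j, by rwa [pow_succ, ← div_eq_mul_inv] at hj⟩
  rw [← ENNReal.tsum_mul_left]
  calc wolff n μ x
      ≤ ∫⁻ r in ⋃ j : ℕ, Ioc ((2:ℝ)⁻¹ ^ j / 2) ((2:ℝ)⁻¹ ^ j),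
          (μ (ball x r) / ENNReal.ofReal (r ^ (n - 2))) ^ ((2:ℝ) / ((n:ℝ) - 2)) :=
        lintegral_mono_set hcover
    _ ≤ _ := (lintegral_iUnion_le _ _).trans <| ENNReal.tsum_le_tsum fun j =>
        setLIntegral_wolff_integrand_Ioc_le hn μ x (by positivity)

theorem measure_ball_rpow_div_le_lintegral_of_crossing {E : Type*} [NormedAddCommGroup E]
    [NormedSpace ℝ E] [MeasurableSpace E] [OpensMeasurableSpace E] (μ : Measure E)
    {s p : ℝ} (hp : 0 ≤ p) (hsp : s * p = -2) {c c' : ℝ → E} {a b : ℝ} (hab : a ≤ b)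
    (hc : ∀ t ∈ Icc a b, HasDerivWithinAt c (c' t) (Icc a b) t)
    (hc' : ContinuousOn c' (Icc a b)) {x₀ : E} {r : ℝ} (hr : 0 < r)
    (hnear : ∀ t ∈ Ioo a b, ‖c t - x₀‖ ≤ r) (hgap : r / 2 ≤ ‖c a - x₀‖ - ‖c b - x₀‖) :
    μ (ball x₀ r) ^ p / ENNReal.ofReal r ≤
      8 * ∫⁻ t in Ioo a b,
        (∫⁻ y, ENNReal.ofReal ‖c t - y‖ ^ s ∂μ) ^ p * ENNReal.ofReal ‖c' t‖ := by
  have hs : s ≤ 0 := by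
    by_contra! hs
    linarith [mul_nonneg hs.le hp]
  set K := μ (ball x₀ r) ^ p * ENNReal.ofReal ((2 * r) ^ (-2 : ℝ))
  have hpot : ∀ t ∈ Ioo a b, K ≤ (∫⁻ y, ENNReal.ofReal ‖c t - y‖ ^ s ∂μ) ^ p := fun t ht =>
    calc K = (ENNReal.ofReal (2 * r) ^ s * μ (ball x₀ r)) ^ p := by
          rw [ENNReal.mul_rpow_of_nonneg _ _ hp, ← ENNReal.rpow_mul, hsp,
            ENNReal.ofReal_rpow_of_pos (by positivity), mul_comm]
      _ ≤ _ := ENNReal.rpow_le_rpow (rpow_mul_measure_ball_le_lintegral_rpow μ hs (hnear t ht)) hp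
  have hlen : ENNReal.ofReal (r / 2) ≤ ∫⁻ t in Ioo a b, ENNReal.ofReal ‖c' t‖ := by
    refine le_trans (ENNReal.ofReal_le_ofReal (hgap.trans ?_))
      (ofReal_norm_sub_le_lintegral_norm_deriv hab hc hc')
    simpa [norm_sub_rev (c a)] using norm_sub_norm_le (c a - x₀) (c b - x₀)
  have hK : μ (ball x₀ r) ^ p / ENNReal.ofReal r = 8 * (K * ENNReal.ofReal (r / 2)) := by
    have hreal : (2 * r) ^ (-2 : ℝ) * (r / 2) = 8⁻¹ * r⁻¹ := by
      rw [Real.rpow_neg (by positivity), Real.rpow_two]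
      field_simp
      ring
    rw [mul_assoc, ← ENNReal.ofReal_mul (by positivity), hreal, ENNReal.ofReal_mul (by norm_num),
      ENNReal.ofReal_inv_of_pos hr, ENNReal.ofReal_inv_of_pos (by norm_num), ENNReal.ofReal_ofNat,
      mul_left_comm, ← mul_assoc (8 : ℝ≥0∞), ENNReal.mul_inv_cancel (by norm_num) (by norm_num),
      one_mul, div_eq_mul_inv]
  have hmeas : AEMeasurable (fun t => ENNReal.ofReal ‖c' t‖) (volume.restrict (Ioo a b)) :=
    ((hc'.mono Ioo_subset_Icc_self).norm.aemeasurable measurableSet_Ioo).ennreal_ofReal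
  calc μ (ball x₀ r) ^ p / ENNReal.ofReal r = 8 * (K * ENNReal.ofReal (r / 2)) := hK
    _ ≤ 8 * (K * ∫⁻ t in Ioo a b, ENNReal.ofReal ‖c' t‖) := by gcongr
    _ = 8 * ∫⁻ t in Ioo a b, K * ENNReal.ofReal ‖c' t‖ := by rw [lintegral_const_mul'' _ hmeas]
    _ ≤ _ := by
        gcongr 8 * ?_
        exact setLIntegral_mono' measurableSet_Ioo fun t ht => mul_le_mul_left (hpot t ht) _

theorem exists_dyadic_crossings {S : Set ℝ} (hS : S.OrdConnected) {f : ℝ → ℝ}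
    (hf : ContinuousOn f S) {s : ℝ} (hs : IsLeast S s) (hfs : 1 / 2 ≤ f s)
    (happroach : ∀ ε > 0, ∃ t ∈ S, f t < ε) :
    ∃ a b : ℕ → ℝ, Pairwise (Disjoint on fun k => Ioo (a k) (b k)) ∧
      ∀ k, a k ≤ b k ∧ Icc (a k) (b k) ⊆ S ∧ (∀ t ∈ Ioo (a k) (b k), f t ≤ 2⁻¹ ^ (k + 1)) ∧
        2⁻¹ ^ (k + 1) / 2 ≤ f (a k) - f (b k) := by
  have hcross : ∀ k : ℕ, ∃ a b, a < b ∧ a ∈ S ∧ b ∈ S ∧ (2:ℝ)⁻¹ ^ (k + 1) ≤ f a ∧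
      f b ≤ 2⁻¹ ^ (k + 2) ∧ MapsTo f (Ioo a b) (Ioo (2⁻¹ ^ (k + 2)) (2⁻¹ ^ (k + 1))) := by
    intro k
    obtain ⟨t, ht, hft⟩ := happroach (2⁻¹ ^ (k + 2)) (by positivity)
    have hst : Icc s t ⊆ S := hS.out hs.1 ht
    have hhalf : (2:ℝ)⁻¹ ^ (k + 1) ≤ 1 / 2 := by
      simpa using pow_le_pow_of_le_one (by norm_num : (0:ℝ) ≤ 2⁻¹) (by norm_num)
        (by omega : 1 ≤ k + 1)
    obtain ⟨a, b, hsa, hab, hbt, hfa, hfb, hmaps⟩ := exists_crossing_interval (hs.2 ht)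
      (hf.mono hst) (pow_lt_pow_right_of_lt_one₀ (by norm_num) (by norm_num) (by omega))
      (hhalf.trans hfs) hft.le
    exact ⟨a, b, hab, hst ⟨hsa, hab.le.trans hbt⟩, hst ⟨hsa.trans hab.le, hbt⟩, hfa, hfb, hmaps⟩
  choose a b hab ha hb hfa hfb hmaps using hcross
  refine ⟨a, b, ?_, fun k => ⟨(hab k).le, hS.out (ha k) (hb k), fun t ht => (hmaps k ht).2.le, ?_⟩⟩
  · have hanti : Antitone fun k : ℕ => (2:ℝ)⁻¹ ^ (k + 1) :=
      fun i j hij => pow_le_pow_of_le_one (by norm_num) (by norm_num) (by omega)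
    refine hanti.pairwise_disjoint_on_Ioo_succ.mono fun i j hij => ?_
    exact (hij.preimage f).mono (hmaps i) (hmaps j)
  · have hlo := hfb k
    rw [pow_succ _ (k + 1)] at hlo
    linarith [hfa k]

theorem tsum_measure_ball_rpow_div_eq_top_of_wolff_eq_top {n : ℕ} (hn : 3 ≤ n)
    (μ : Measure (EuclideanSpace ℝ (Fin n))) [IsFiniteMeasure μ] {x : EuclideanSpace ℝ (Fin n)}
    (hW : wolff n μ x = ⊤) :
    ∑' k : ℕ, μ (ball x (2⁻¹ ^ (k + 1))) ^ ((2:ℝ) / ((n:ℝ) - 2)) /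
      ENNReal.ofReal (2⁻¹ ^ (k + 1)) = ⊤ := by
  refine ENNReal.tsum_add_one_eq_top (f := fun j =>
    μ (ball x (2⁻¹ ^ j)) ^ ((2:ℝ) / ((n:ℝ) - 2)) / ENNReal.ofReal (2⁻¹ ^ j)) ?_ ?_
  · simpa [ENNReal.mul_eq_top, hW] using wolff_le_two_mul_tsum hn μ x
  · simpa using ENNReal.rpow_ne_top_of_nonneg (two_div_sub_two_pos hn).le (measure_ne_top μ _)

/-- Let `n ≥ 3`, `μ` a finite Borel measure on `ℝⁿ`, and `x₀` a point with `W^μ(x₀) = ∞`.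
Let `u(x) = ∫ |x-y|^{2-n} dμ(y)`. Then for every `T ∈ (0,∞]` and every continuously
differentiable curve `c : [0,T) → ℝⁿ` with `|c(0) - x₀| ≥ 1/2` and
`inf_{t ∈ [0,T)} |c(t) - x₀| = 0`, the weighted length
`∫_0^T u(c(t))^{2/(n-2)} ‖c'(t)‖ dt` is infinite. -/
theorem stmt6 (n : ℕ) (hn : 3 ≤ n) (μ : Measure (EuclideanSpace ℝ (Fin n)))
    [IsFiniteMeasure μ] (x₀ : EuclideanSpace ℝ (Fin n))
    (hW : wolff n μ x₀ = ⊤)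
    (T : ℝ≥0∞) (hT : 0 < T)
    (S : Set ℝ) (hS : S = {t : ℝ | 0 ≤ t ∧ ENNReal.ofReal t < T})
    (c c' : ℝ → EuclideanSpace ℝ (Fin n))
    (hderiv : ∀ t ∈ S, HasDerivWithinAt c (c' t) S t)
    (hcont : ContinuousOn c' S)
    (hstart : 1/2 ≤ ‖c 0 - x₀‖)
    (happroach : sInf ((fun t => ‖c t - x₀‖) '' S) = 0) :
    (∫⁻ t in S,
        (∫⁻ y, (ENNReal.ofReal ‖c t - y‖) ^ ((2:ℝ) - (n:ℝ)) ∂μ) ^ ((2:ℝ) / ((n:ℝ) - 2))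
          * ENNReal.ofReal ‖c' t‖) = ⊤ := by
  set p : ℝ := 2 / ((n:ℝ) - 2)
  set F : ℝ → ℝ≥0∞ := fun t =>
    (∫⁻ y, ENNReal.ofReal ‖c t - y‖ ^ ((2:ℝ) - n) ∂μ) ^ p * ENNReal.ofReal ‖c' t‖
  have hSconn : S.OrdConnected := hS ▸ ⟨fun x hx y hy z hz =>
    ⟨hx.1.trans hz.1, (ENNReal.ofReal_le_ofReal hz.2).trans_lt hy.2⟩⟩
  have hS0 : IsLeast S 0 := hS ▸ ⟨⟨le_rfl, by simpa using hT⟩, fun t ht => ht.1⟩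
  obtain ⟨a, b, hdisj, hcross⟩ := exists_dyadic_crossings hSconn
    (fun t ht => ((hderiv t ht).continuousWithinAt.sub continuousWithinAt_const).norm) hS0 hstart
    fun ε hε => by
      obtain ⟨_, ⟨t, ht, rfl⟩, hlt⟩ :=
        exists_lt_of_csInf_lt ⟨_, mem_image_of_mem _ hS0.1⟩ (happroach ▸ hε)
      exact ⟨t, ht, hlt⟩
  have htop : ⊤ ≤ 8 * ∫⁻ t in S, F t :=
    calc ⊤ = _ := (tsum_measure_ball_rpow_div_eq_top_of_wolff_eq_top hn μ hW).symm
      _ ≤ ∑' k, 8 * ∫⁻ t in Ioo (a k) (b k), F t := ENNReal.tsum_le_tsum fun k => by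
        obtain ⟨hab, hsub, hnear, hgap⟩ := hcross k
        exact measure_ball_rpow_div_le_lintegral_of_crossing μ (two_div_sub_two_pos hn).le
          (two_sub_mul_two_div_sub_two hn) hab
          (fun t ht => (hderiv t (hsub ht)).mono hsub) (hcont.mono hsub) (by positivity) hnear hgap
      _ = 8 * ∫⁻ t in ⋃ k, Ioo (a k) (b k), F t := by
        rw [ENNReal.tsum_mul_left, lintegral_iUnion (fun _ => measurableSet_Ioo) hdisj]
      _ ≤ 8 * ∫⁻ t in S, F t := by
        gcongr
        exact iUnion_subset fun k => Ioo_subset_Icc_self.trans (hcross k).2.1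
  simpa [ENNReal.mul_eq_top] using htop
end

section
/- There exists a constant C > 0 such that for every finite Borel measure μ on ℝ³ and every bounded measurable set A ⊂ ℝ³, one has ∫_A ( ∫_{ℝ³} |x-y|^{-1} dμ(y) )² dx ≤ C · vol(A)^{1/3} · μ(ℝ³)², where vol denotes Lebesgue measure on ℝ³. -/
/-!
By Cauchy–Schwarz in `y` and Tonelli, the left-hand side is at most
`μ(ℝ³) ∫ (∫_A |x - y|⁻² dx) dμ(y)`, so it suffices to bound `∫_A |x - y|⁻² dx` uniformly in `y`.
In dimension `d`, split `A` along the ball of radius `r = vol(A)^{1/d}` around `y`: in polar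
coordinates the ball contributes `d vol(B₁) r` to `∫_A |x - y|^{-(d-1)} dx`, and the rest at most
`r^{-(d-1)} vol(A) = r`.
-/

open MeasureTheory ENNReal Metric Set

theorem lintegral_sq_le_measure_univ_mul {α : Type*} [MeasurableSpace α] (μ : Measure α)
    {f : α → ℝ≥0∞} (hf : AEMeasurable f μ) :
    (∫⁻ a, f a ∂μ) ^ 2 ≤ μ univ * ∫⁻ a, f a ^ 2 ∂μ := by
  have h := ENNReal.lintegral_mul_le_Lp_mul_Lq μ Real.HolderConjugate.two_two hf
    aemeasurable_const (g := 1)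
  simp only [Pi.mul_apply, Pi.one_apply, mul_one, one_rpow, lintegral_const, one_mul] at h
  calc (∫⁻ a, f a ∂μ) ^ 2 ≤ ((∫⁻ a, f a ^ (2 : ℝ) ∂μ) ^ (1 / 2 : ℝ) * μ univ ^ (1 / 2 : ℝ)) ^ 2 := by
        gcongr
    _ = μ univ * ∫⁻ a, f a ^ 2 ∂μ := by
        rw [mul_pow, ← rpow_mul_natCast, ← rpow_mul_natCast]
        norm_num [mul_comm]

theorem lintegral_sq_lintegral_le {α β : Type*} [MeasurableSpace α] [MeasurableSpace β]
    (μ : Measure α) [SFinite μ] (ν : Measure β) [SFinite ν] {K : α → β → ℝ≥0∞}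
    (hK : Measurable (Function.uncurry K)) :
    ∫⁻ x, (∫⁻ y, K x y ∂ν) ^ 2 ∂μ ≤ ν univ * ∫⁻ y, (∫⁻ x, K x y ^ 2 ∂μ) ∂ν := calc
  ∫⁻ x, (∫⁻ y, K x y ∂ν) ^ 2 ∂μ ≤ ∫⁻ x, ν univ * ∫⁻ y, K x y ^ 2 ∂ν ∂μ :=
    lintegral_mono fun x ↦
      lintegral_sq_le_measure_univ_mul ν (hK.comp measurable_prodMk_left).aemeasurable
  _ = ν univ * ∫⁻ x, ∫⁻ y, K x y ^ 2 ∂ν ∂μ :=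
    lintegral_const_mul _ (hK.pow_const 2).lintegral_prod_right'
  _ = ν univ * ∫⁻ y, (∫⁻ x, K x y ^ 2 ∂μ) ∂ν := by
    rw [lintegral_lintegral_swap (hK.pow_const 2).aemeasurable]

section
variable {E : Type*} [NormedAddCommGroup E] [NormedSpace ℝ E] [MeasurableSpace E] [BorelSpace E]
  [FiniteDimensional ℝ E] [Nontrivial E] (μ : Measure E) [μ.IsAddHaarMeasure]

theorem lintegral_fun_norm_addHaar {f : ℝ → ℝ≥0∞} (hf : Measurable f) :
    ∫⁻ x, f ‖x‖ ∂μ = Module.finrank ℝ E * μ (ball 0 1) *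
      ∫⁻ r in Ioi (0 : ℝ), ENNReal.ofReal (r ^ (Module.finrank ℝ E - 1)) * f r := by
  have hf' : Measurable fun r : Ioi (0 : ℝ) ↦ f r := hf.comp measurable_subtype_coe
  calc ∫⁻ x, f ‖x‖ ∂μ = ∫⁻ x : ({(0 : E)}ᶜ : Set E), f ‖x.1‖ ∂(μ.comap (↑)) := by
        rw [lintegral_subtype_comap (measurableSet_singleton _).compl (fun x ↦ f ‖x‖),
          restrict_compl_singleton]
    _ = ∫⁻ p, (fun _ ↦ 1) p.1 * (fun r : Ioi (0 : ℝ) ↦ f r) p.2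
          ∂(μ.toSphere.prod (Measure.volumeIoiPow (Module.finrank ℝ E - 1))) := by
        simpa using μ.measurePreserving_homeomorphUnitSphereProd.lintegral_comp_emb
          (Homeomorph.measurableEmbedding _) (fun p ↦ f p.2.1)
    _ = _ := by
        rw [lintegral_prod_mul aemeasurable_const hf'.aemeasurable,
          lintegral_one, μ.toSphere_apply_univ, Measure.volumeIoiPow,
          lintegral_withDensity_eq_lintegral_mul _ (by fun_prop) hf',
          ← lintegral_subtype_comap measurableSet_Ioi (fun r ↦ ENNReal.ofReal (r ^ _) * f r)]
        rfl

theorem setLIntegral_ball_inv_norm_sub_pow (y : E) (r : ℝ) :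
    ∫⁻ x in ball y r, (ENNReal.ofReal ‖x - y‖)⁻¹ ^ (Module.finrank ℝ E - 1) ∂μ =
      Module.finrank ℝ E * μ (ball 0 1) * ENNReal.ofReal r := by
  set n := Module.finrank ℝ E - 1
  set g : ℝ → ℝ≥0∞ := fun t ↦ (ENNReal.ofReal t)⁻¹ ^ n
  have hg : Measurable g := by fun_prop
  have hball : ∀ x, (ball y r).indicator (fun x ↦ g ‖x - y‖) x = (Iio r).indicator g ‖x - y‖ := by
    intro x
    simp only [indicator, mem_ball, dist_eq_norm, mem_Iio]
  have hcancel : ∀ t ∈ Ioi (0 : ℝ), ENNReal.ofReal (t ^ n) * (Iio r).indicator g t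
      = (Iio r).indicator 1 t := by
    intro t (ht : 0 < t)
    by_cases htr : t < r
    · simp only [indicator_of_mem (mem_Iio.2 htr), g, ENNReal.ofReal_pow ht.le, ← mul_pow,
        ENNReal.mul_inv_cancel (ENNReal.ofReal_pos.2 ht).ne' ofReal_ne_top, one_pow, Pi.one_apply]
    · simp [htr]
  calc ∫⁻ x in ball y r, g ‖x - y‖ ∂μ = ∫⁻ x, (Iio r).indicator g ‖x - y‖ ∂μ := by
        simp only [← lintegral_indicator measurableSet_ball, hball]
    _ = ∫⁻ x, (Iio r).indicator g ‖x‖ ∂μ :=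
        lintegral_sub_right_eq_self (fun x ↦ (Iio r).indicator g ‖x‖) y
    _ = Module.finrank ℝ E * μ (ball 0 1) * ∫⁻ t in Ioi (0 : ℝ), (Iio r).indicator 1 t := by
        rw [lintegral_fun_norm_addHaar μ (hg.indicator measurableSet_Iio),
          setLIntegral_congr_fun measurableSet_Ioi hcancel]
    _ = _ := by
        rw [lintegral_indicator_one measurableSet_Iio, Measure.restrict_apply measurableSet_Iio,
          Iio_inter_Ioi, Real.volume_Ioo, sub_zero]

theorem setLIntegral_inv_norm_sub_pow_le (A : Set E) (y : E) (r : ℝ) :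
    ∫⁻ x in A, (ENNReal.ofReal ‖x - y‖)⁻¹ ^ (Module.finrank ℝ E - 1) ∂μ ≤
      Module.finrank ℝ E * μ (ball 0 1) * ENNReal.ofReal r +
        (ENNReal.ofReal r)⁻¹ ^ (Module.finrank ℝ E - 1) * μ A := by
  set G : E → ℝ≥0∞ := fun x ↦ (ENNReal.ofReal ‖x - y‖)⁻¹ ^ (Module.finrank ℝ E - 1)
  have hfar : ∀ x ∈ A \ ball y r, G x ≤ (ENNReal.ofReal r)⁻¹ ^ (Module.finrank ℝ E - 1) := by
    intro x hx
    have : r ≤ ‖x - y‖ := by simpa [dist_eq_norm] using hx.2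
    simp only [G]
    gcongr
  calc ∫⁻ x in A, G x ∂μ ≤ ∫⁻ x in ball y r ∪ A \ ball y r, G x ∂μ :=
        lintegral_mono_set (union_sdiff_self.symm ▸ subset_union_right)
    _ ≤ ∫⁻ x in ball y r, G x ∂μ + ∫⁻ x in A \ ball y r, G x ∂μ := lintegral_union_le _ _ _
    _ ≤ _ := by
        rw [setLIntegral_ball_inv_norm_sub_pow]
        gcongr
        calc ∫⁻ x in A \ ball y r, G x ∂μ
            ≤ ∫⁻ _ in A \ ball y r, (ENNReal.ofReal r)⁻¹ ^ (Module.finrank ℝ E - 1) ∂μ :=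
              setLIntegral_mono measurable_const hfar
          _ ≤ _ := by
              rw [setLIntegral_const]
              gcongr
              exact sdiff_subset

theorem setLIntegral_inv_norm_sub_pow_le_rpow {A : Set E} (hA : μ A ≠ ∞) (y : E) :
    ∫⁻ x in A, (ENNReal.ofReal ‖x - y‖)⁻¹ ^ (Module.finrank ℝ E - 1) ∂μ ≤
      (Module.finrank ℝ E * μ (ball 0 1) + 1) * μ A ^ ((Module.finrank ℝ E : ℝ)⁻¹) := by
  rcases eq_or_ne (μ A) 0 with hA0 | hA0
  · simp [Measure.restrict_eq_zero.2 hA0]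
  set d := Module.finrank ℝ E
  have hd : d ≠ 0 := Module.finrank_pos.ne'
  set s := μ A ^ ((d : ℝ)⁻¹)
  have hs : s ≠ ∞ := rpow_ne_top_of_nonneg (by positivity) hA
  have hs0 : s ≠ 0 := by simp [s, hA0, hA]
  have hofReal : ENNReal.ofReal s.toReal = s := ofReal_toReal hs
  have hsA : s⁻¹ ^ (d - 1) * μ A = s := calc
    s⁻¹ ^ (d - 1) * μ A = s⁻¹ ^ (d - 1) * (s ^ (d - 1) * s) := by
      rw [← pow_succ, Nat.sub_add_cancel (Nat.one_le_iff_ne_zero.2 hd), rpow_inv_natCast_pow hd]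
    _ = s := by rw [← mul_assoc, ← mul_pow, ENNReal.inv_mul_cancel hs0 hs, one_pow, one_mul]
  calc _ ≤ d * μ (ball 0 1) * s + s⁻¹ ^ (d - 1) * μ A := by
        simpa only [hofReal] using setLIntegral_inv_norm_sub_pow_le μ A y s.toReal
    _ = _ := by rw [hsA, add_mul, one_mul]
end

/-- There is a constant `C > 0` such that for every finite Borel measure `μ` on `ℝ³`
and every bounded measurable `A ⊆ ℝ³`,
`∫_A ( ∫ |x-y|⁻¹ dμ(y) )² dx ≤ C vol(A)^{1/3} μ(ℝ³)²`. -/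
theorem stmt9 :
    ∃ C : ℝ, 0 < C ∧
      ∀ μ : Measure (EuclideanSpace ℝ (Fin 3)), IsFiniteMeasure μ →
        ∀ A : Set (EuclideanSpace ℝ (Fin 3)), MeasurableSet A → Bornology.IsBounded A →
          (∫⁻ x in A, (∫⁻ y, (ENNReal.ofReal ‖x - y‖)⁻¹ ∂μ) ^ 2)
            ≤ ENNReal.ofReal C * (volume A) ^ ((1:ℝ)/3) * (μ Set.univ) ^ 2 := by
  set c : ℝ≥0∞ := 3 * volume (ball (0 : EuclideanSpace ℝ (Fin 3)) 1) + 1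
  have hc : c ≠ ∞ := by finiteness
  refine ⟨c.toReal, toReal_pos (by positivity) hc, fun μ _ A _ hA ↦ ?_⟩
  have hpotential (y : EuclideanSpace ℝ (Fin 3)) :
      ∫⁻ x in A, (ENNReal.ofReal ‖x - y‖)⁻¹ ^ 2 ≤ c * volume A ^ ((1 : ℝ) / 3) := by
    simpa [finrank_euclideanSpace_fin, c] using
      setLIntegral_inv_norm_sub_pow_le_rpow volume hA.measure_lt_top.ne y
  calc (∫⁻ x in A, (∫⁻ y, (ENNReal.ofReal ‖x - y‖)⁻¹ ∂μ) ^ 2)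
      ≤ μ univ * ∫⁻ y, (∫⁻ x in A, (ENNReal.ofReal ‖x - y‖)⁻¹ ^ 2) ∂μ :=
        lintegral_sq_lintegral_le _ _ (K := fun x y ↦ (ENNReal.ofReal ‖x - y‖)⁻¹)
          (measurable_fst.sub measurable_snd).norm.ennreal_ofReal.inv
    _ ≤ μ univ * ∫⁻ _, c * volume A ^ ((1 : ℝ) / 3) ∂μ := by
        gcongr with y
        exact hpotential y
    _ = ENNReal.ofReal c.toReal * volume A ^ ((1 : ℝ) / 3) * μ univ ^ 2 := by
        rw [lintegral_const, ofReal_toReal hc]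
        ring
end

section
/- Let n ≥ 5. There exists a constant C = C(n) > 0 such that for every finite Borel measure μ on ℝ^n and every integer m ≥ 2, writing ρ_j = 2^{-j}, D_m = B(0,ρ_m) \ B(0,ρ_{m+1}) and D̃_m = B(0,ρ_{m-2}) \ B(0,ρ_{m+2}), one has ∫_{D_m} ( ∫_{D̃_m} |x-y|^{2-n} dμ(y) )^{2/(n-2)} dx ≤ C · μ(B(0,ρ_{m-2}))^{2/(n-2)} · ρ_m^{n-2}. -/
/-!
Put `p = 2/(n-2)`, which is `< 1` because `n ≥ 5`, and `ρ = ρ_m`. Enlarge `D_m` to `B(0,ρ)` and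
`D̃_m` to `B(0,4ρ)`. By Hölder's inequality (Jensen for the concave map `t ↦ tᵖ`) the left-hand
side is at most `(∫_{B(0,ρ)} ∫ |x-y|^{2-n} dμ(y) dx)ᵖ |B(0,ρ)|^{1-p}`. By Fubini, and because
`B(0,ρ) ⊆ B(y,5ρ)` for every `y ∈ B(0,4ρ)`, the double integral is at most
`μ(B(0,4ρ)) ∫_{B(y,5ρ)} |x-y|^{2-n} dx = μ(B(0,4ρ)) (5ρ)² ∫_{B(0,1)} |x|^{2-n} dx`
(translate and rescale Lebesgue measure), and the last integral is finite. Since `|B(0,ρ)| ∼ ρⁿ`,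
the powers of `ρ` combine to `ρ^{2p + n(1-p)} = ρ^{n-2}`.
-/

open MeasureTheory ENNReal Metric Module

theorem lintegral_rpow_le_of_lt_one {α : Type*} [MeasurableSpace α] (μ : Measure α) {p : ℝ}
    (hp0 : 0 < p) (hp1 : p < 1) {f : α → ℝ≥0∞} (hf : AEMeasurable f μ) :
    ∫⁻ x, f x ^ p ∂μ ≤ (∫⁻ x, f x ∂μ) ^ p * μ Set.univ ^ (1 - p) := by
  have h := ENNReal.lintegral_mul_le_Lp_mul_Lq μ (Real.HolderConjugate.inv_one_sub_inv hp0 hp1)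
    (hf.pow_const p) aemeasurable_const (g := 1)
  simpa only [Pi.mul_apply, Pi.one_apply, mul_one, ENNReal.one_rpow, lintegral_one, one_div,
    inv_inv, ← ENNReal.rpow_mul, mul_inv_cancel₀ hp0.ne', ENNReal.rpow_one] using h

theorem pow_two_rpow_mul_pow_rpow_eq_pow_sub_two {ρ : ℝ} (hρ : 0 < ρ) {d : ℕ} (hd : 2 < d) :
    (ρ ^ 2) ^ (2 / ((d : ℝ) - 2)) * (ρ ^ d) ^ (1 - 2 / ((d : ℝ) - 2)) = ρ ^ (d - 2) := by
  have hd' : (d : ℝ) - 2 ≠ 0 := by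
    have : (2 : ℝ) < d := by exact_mod_cast hd
    linarith
  rw [← Real.rpow_natCast ρ 2, ← Real.rpow_natCast ρ d, ← Real.rpow_natCast ρ (d - 2),
    ← Real.rpow_mul hρ.le, ← Real.rpow_mul hρ.le, ← Real.rpow_add hρ, Nat.cast_sub hd.le]
  congr 1
  push_cast
  field_simp
  ring

section AddHaar

variable {E : Type*} [NormedAddCommGroup E] [NormedSpace ℝ E] [FiniteDimensional ℝ E]
  [MeasurableSpace E] [BorelSpace E] (ν : Measure E) [ν.IsAddHaarMeasure]

theorem lintegral_comp_smul_of_pos (f : E → ℝ≥0∞) {R : ℝ} (hR : 0 < R) :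
    ∫⁻ x, f (R • x) ∂ν = ENNReal.ofReal (R ^ finrank ℝ E)⁻¹ * ∫⁻ x, f x ∂ν := by
  let g : E ≃ᵐ E := (Homeomorph.smul (Units.mk0 R hR.ne')).toMeasurableEquiv
  have h := lintegral_map_equiv f g (μ := ν)
  rw [show ⇑g = (R • ·) from rfl, Measure.map_addHaar_smul ν hR.ne', lintegral_smul_measure,
    abs_of_pos (by positivity)] at h
  exact h.symm

theorem lintegral_ball_norm_sub_rpow (a : ℝ) (y : E) {R : ℝ} (hR : 0 < R) :
    ∫⁻ x in ball y R, ENNReal.ofReal ‖x - y‖ ^ a ∂ν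
      = ENNReal.ofReal R ^ ((finrank ℝ E : ℝ) + a)
          * ∫⁻ x in ball 0 1, ENNReal.ofReal ‖x‖ ^ a ∂ν := by
  set φ : E → ℝ≥0∞ := fun x ↦ ENNReal.ofReal ‖x‖ ^ a
  have hR' : ENNReal.ofReal R ≠ 0 := by simpa using hR
  have htranslate : ∫⁻ x in ball y R, φ (x - y) ∂ν = ∫⁻ x in ball 0 R, φ x ∂ν := by
    rw [← lintegral_indicator measurableSet_ball, ← lintegral_indicator measurableSet_ball,
      ← lintegral_sub_right_eq_self ((ball (0 : E) R).indicator φ) y]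
    congr 1 with x
    simp [Set.indicator, dist_eq_norm]
  have hdilate : ∀ x, (ball (0 : E) R).indicator φ (R • x)
      = ENNReal.ofReal R ^ a * (ball (0 : E) 1).indicator φ x := by
    intro x
    have hmem : R • x ∈ ball (0 : E) R ↔ x ∈ ball (0 : E) 1 := by
      simp [norm_smul, abs_of_pos hR, hR]
    by_cases hx : x ∈ ball (0 : E) 1
    · simp only [Set.indicator_of_mem hx, Set.indicator_of_mem (hmem.2 hx), φ, norm_smul,
        Real.norm_of_nonneg hR.le, ENNReal.ofReal_mul hR.le]
      exact ENNReal.mul_rpow_of_ne_top ofReal_ne_top ofReal_ne_top a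
    · simp [Set.indicator_of_notMem hx, Set.indicator_of_notMem (mt hmem.1 hx)]
  have hscale := lintegral_comp_smul_of_pos ν ((ball (0 : E) R).indicator φ) hR
  simp only [hdilate] at hscale
  rw [lintegral_const_mul' _ _ (ENNReal.rpow_ne_top_of_ne_zero hR' ofReal_ne_top),
    ENNReal.ofReal_inv_of_pos (by positivity), ENNReal.ofReal_pow hR.le,
    ← ENNReal.rpow_natCast] at hscale
  rw [htranslate, ← lintegral_indicator measurableSet_ball, ← lintegral_indicator measurableSet_ball,
    ENNReal.rpow_add _ _ hR' ofReal_ne_top, mul_assoc, hscale, ← mul_assoc,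
    ENNReal.mul_inv_cancel, one_mul]
  · exact (ENNReal.rpow_pos (by positivity) ofReal_ne_top).ne'
  · exact ENNReal.rpow_ne_top_of_nonneg (by positivity) ofReal_ne_top

theorem lintegral_unitBall_norm_rpow_lt_top [Nontrivial E] {a : ℝ}
    (ha : -(finrank ℝ E : ℝ) < a) :
    ∫⁻ x in ball 0 1, ENNReal.ofReal ‖x‖ ^ a ∂ν < ⊤ := by
  have hint : IntegrableOn (fun x : E ↦ ‖x‖ ^ a) (ball 0 1) ν := by
    refine integrableOn_ball_of_norm_le_rpow (C := 1) (α := -a) Module.finrank_pos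
      (by linarith) (.of_forall fun x ↦ ?_) (by fun_prop : Measurable _).aestronglyMeasurable
    rw [neg_neg, one_mul, Real.norm_of_nonneg (by positivity)]
  refine lt_of_eq_of_lt (lintegral_congr_ae ?_) hint.lintegral_lt_top
  filter_upwards [ae_restrict_of_ae (compl_mem_ae_iff.mpr (measure_singleton (0 : E)))] with x hx
  exact ENNReal.ofReal_rpow_of_pos (norm_pos_iff.mpr hx)

theorem lintegral_lintegral_ball_norm_sub_rpow_le (μ : Measure E) [SFinite μ] (a : ℝ)
    {r R : ℝ} (hr : 0 < r) (hR : 0 ≤ R) :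
    ∫⁻ x in ball 0 r, ∫⁻ y in ball 0 R, ENNReal.ofReal ‖x - y‖ ^ a ∂μ ∂ν
      ≤ ENNReal.ofReal (r + R) ^ ((finrank ℝ E : ℝ) + a)
          * (∫⁻ x in ball 0 1, ENNReal.ofReal ‖x‖ ^ a ∂ν) * μ (ball 0 R) := by
  have hmeas : Measurable fun q : E × E ↦ ENNReal.ofReal ‖q.1 - q.2‖ ^ a := by fun_prop
  rw [lintegral_lintegral_swap hmeas.aemeasurable, ← setLIntegral_const]
  refine setLIntegral_mono' measurableSet_ball fun y hy ↦ ?_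
  calc ∫⁻ x in ball 0 r, ENNReal.ofReal ‖x - y‖ ^ a ∂ν
      ≤ ∫⁻ x in ball y (r + R), ENNReal.ofReal ‖x - y‖ ^ a ∂ν := by
        refine lintegral_mono_set fun x hx ↦ ?_
        rw [mem_ball_zero_iff] at hx hy
        rw [mem_ball, dist_eq_norm]
        linarith [norm_sub_le x y]
    _ = _ := lintegral_ball_norm_sub_rpow ν a y (by linarith)

theorem exists_lintegral_ball_riesz_potential_rpow_le [Nontrivial E] (hd : 4 < finrank ℝ E) :
    ∃ C : ℝ≥0∞, C ≠ ⊤ ∧ ∀ (μ : Measure E) [SFinite μ] {ρ : ℝ}, 0 < ρ →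
      ∫⁻ x in ball 0 ρ,
          (∫⁻ y in ball 0 (4 * ρ), ENNReal.ofReal ‖x - y‖ ^ (2 - (finrank ℝ E : ℝ)) ∂μ)
            ^ (2 / ((finrank ℝ E : ℝ) - 2)) ∂ν
        ≤ C * μ (ball 0 (4 * ρ)) ^ (2 / ((finrank ℝ E : ℝ) - 2))
            * ENNReal.ofReal (ρ ^ (finrank ℝ E - 2)) := by
  set d := finrank ℝ E
  set p : ℝ := 2 / ((d : ℝ) - 2)
  set I := ∫⁻ x in ball (0 : E) 1, ENNReal.ofReal ‖x‖ ^ (2 - (d : ℝ)) ∂ν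
  have hd' : (4 : ℝ) < d := by exact_mod_cast hd
  have hp0 : 0 < p := div_pos two_pos (by linarith)
  have hp1 : p < 1 := (div_lt_one (by linarith)).mpr (by linarith)
  have hI : I ≠ ⊤ := (lintegral_unitBall_norm_rpow_lt_top ν (by linarith)).ne
  refine ⟨(ENNReal.ofReal 25 * I) ^ p * ν (ball 0 1) ^ (1 - p), ?_, fun μ _ ρ hρ ↦ ?_⟩
  · exact mul_ne_top (rpow_ne_top_of_nonneg hp0.le (mul_ne_top ofReal_ne_top hI))
      (rpow_ne_top_of_nonneg (by linarith) measure_ball_lt_top.ne)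
  have hmeas : Measurable fun x : E ↦
      ∫⁻ y in ball 0 (4 * ρ), ENNReal.ofReal ‖x - y‖ ^ (2 - (d : ℝ)) ∂μ :=
    Measurable.lintegral_prod_right' (f := fun q : E × E ↦ ENNReal.ofReal ‖q.1 - q.2‖ ^ _)
      (by fun_prop)
  have hρpow : ENNReal.ofReal (ρ ^ 2) ^ p * ENNReal.ofReal (ρ ^ d) ^ (1 - p)
      = ENNReal.ofReal (ρ ^ (d - 2)) := by
    rw [ofReal_rpow_of_pos (by positivity), ofReal_rpow_of_pos (by positivity),
      ← ofReal_mul (by positivity), pow_two_rpow_mul_pow_rpow_eq_pow_sub_two hρ (by omega)]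
  calc _ ≤ (∫⁻ x in ball 0 ρ, ∫⁻ y in ball 0 (4 * ρ),
            ENNReal.ofReal ‖x - y‖ ^ (2 - (d : ℝ)) ∂μ ∂ν) ^ p * ν (ball 0 ρ) ^ (1 - p) := by
        simpa using lintegral_rpow_le_of_lt_one (ν.restrict (ball 0 ρ)) hp0 hp1 hmeas.aemeasurable
    _ ≤ (ENNReal.ofReal (ρ + 4 * ρ) ^ ((d : ℝ) + (2 - d)) * I * μ (ball 0 (4 * ρ))) ^ p
          * (ENNReal.ofReal (ρ ^ d) * ν (ball 0 1)) ^ (1 - p) := by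
        rw [Measure.addHaar_ball ν 0 hρ.le]
        gcongr
        exact lintegral_lintegral_ball_norm_sub_rpow_le ν μ _ hρ (by positivity)
    _ = _ := by
        rw [show (d : ℝ) + (2 - d) = (2 : ℕ) by push_cast; ring, rpow_natCast,
          ← ofReal_pow (by positivity), show (ρ + 4 * ρ) ^ 2 = 25 * ρ ^ 2 by ring,
          ofReal_mul (by norm_num), mul_rpow_of_nonneg _ _ hp0.le, mul_rpow_of_nonneg _ _ hp0.le,
          mul_rpow_of_nonneg _ _ hp0.le, mul_rpow_of_nonneg _ _ hp0.le,
          mul_rpow_of_nonneg _ _ (by linarith), ← hρpow]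
        ring

end AddHaar

/-- Let `n ≥ 5`. There is `C = C(n) > 0` such that for every finite Borel measure `μ`
on `ℝⁿ` and every integer `m ≥ 2`, with `ρ_j = 2^{-j}`,
`D_m = B(0,ρ_m) \ B(0,ρ_{m+1})` and `D̃_m = B(0,ρ_{m-2}) \ B(0,ρ_{m+2})`, one has
`∫_{D_m} ( ∫_{D̃_m} |x-y|^{2-n} dμ(y) )^{2/(n-2)} dx
   ≤ C μ(B(0,ρ_{m-2}))^{2/(n-2)} ρ_m^{n-2}`. -/
theorem stmt11 (n : ℕ) (hn : 5 ≤ n) :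
    ∃ C : ℝ, 0 < C ∧
      ∀ μ : Measure (EuclideanSpace ℝ (Fin n)), IsFiniteMeasure μ →
        ∀ m : ℕ, 2 ≤ m →
          (∫⁻ x in
              Metric.ball (0 : EuclideanSpace ℝ (Fin n)) ((2:ℝ)⁻¹ ^ m) \
                Metric.ball (0 : EuclideanSpace ℝ (Fin n)) ((2:ℝ)⁻¹ ^ (m + 1)),
            (∫⁻ y in
                Metric.ball (0 : EuclideanSpace ℝ (Fin n)) ((2:ℝ)⁻¹ ^ (m - 2)) \
                  Metric.ball (0 : EuclideanSpace ℝ (Fin n)) ((2:ℝ)⁻¹ ^ (m + 2)),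
              (ENNReal.ofReal ‖x - y‖) ^ ((2:ℝ) - (n:ℝ)) ∂μ) ^ ((2:ℝ) / ((n:ℝ) - 2)))
          ≤ ENNReal.ofReal C
              * (μ (Metric.ball (0 : EuclideanSpace ℝ (Fin n)) ((2:ℝ)⁻¹ ^ (m - 2))))
                  ^ ((2:ℝ) / ((n:ℝ) - 2))
              * ENNReal.ofReal (((2:ℝ)⁻¹ ^ m) ^ (n - 2)) := by
  have : Nonempty (Fin n) := ⟨⟨0, by omega⟩⟩
  obtain ⟨C, hC, hbound⟩ := exists_lintegral_ball_riesz_potential_rpow_le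
    (volume : Measure (EuclideanSpace ℝ (Fin n))) (by rw [finrank_euclideanSpace_fin]; omega)
  simp only [finrank_euclideanSpace_fin] at hbound
  refine ⟨C.toReal + 1, by positivity, fun μ _ m hm ↦ ?_⟩
  have hp : (0 : ℝ) ≤ 2 / ((n : ℝ) - 2) :=
    div_nonneg zero_le_two (sub_nonneg.mpr (by exact_mod_cast (by omega : 2 ≤ n)))
  have hradius : (2 : ℝ)⁻¹ ^ (m - 2) = 4 * 2⁻¹ ^ m := by
    conv_rhs => rw [← Nat.sub_add_cancel hm, pow_add]
    ring
  rw [hradius]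
  calc _ ≤ ∫⁻ x in ball 0 (2⁻¹ ^ m), (∫⁻ y in ball 0 (4 * 2⁻¹ ^ m),
            ENNReal.ofReal ‖x - y‖ ^ (2 - (n : ℝ)) ∂μ) ^ (2 / ((n : ℝ) - 2)) :=
        (lintegral_mono_set Set.sdiff_subset).trans (lintegral_mono fun x ↦
          rpow_le_rpow (lintegral_mono_set Set.sdiff_subset) hp)
    _ ≤ _ := hbound μ (by positivity)
    _ ≤ _ := by
        gcongr
        exact le_ofReal_iff_toReal_le hC (by positivity) |>.mpr (by linarith)
end
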